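/- arXiv:2201.09758 — 8 statements merged into one kernel-verified Lean document; each statement's English description precedes it below -/
import Mathlib

section
/- Let R be a ring with identity and P a two-sided ideal of R. Then P is an almost prime right ideal (i.e., the almost prime condition holds for all right ideals A, B) if and only if P is an almost prime ideal (i.e., the condition holds for all two-sided ideals A, B). -/
variable {R : Type*}

/-- `P` is a right ideal of the (possibly nonunital, noncommutative) ring `R`. -/
def IsRightIdeal [NonUnitalRing R] (P : AddSubgroup R) : Prop :=
  ∀ a ∈ P, ∀ r : R, a * r ∈ P

/-- The product `AB` of two right ideals: the additive subgroup generated by products. -/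
def idealMul [NonUnitalRing R] (A B : AddSubgroup R) : AddSubgroup R :=
  AddSubgroup.closure {x : R | ∃ a ∈ A, ∃ b ∈ B, x = a * b}

/-- `P` is an almost prime right ideal. -/
def IsAlmostPrimeRight [NonUnitalRing R] (P : AddSubgroup R) : Prop :=
  IsRightIdeal P ∧ P ≠ ⊤ ∧
    ∀ A B : AddSubgroup R, IsRightIdeal A → IsRightIdeal B →
      idealMul A B ≤ P → ¬ idealMul A B ≤ idealMul P P → A ≤ P ∨ B ≤ P

/-- `P` is a two-sided ideal of `R`. -/
def IsTwoSidedIdealSub [NonUnitalRing R] (P : AddSubgroup R) : Prop :=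
  ∀ a ∈ P, ∀ r : R, a * r ∈ P ∧ r * a ∈ P

/-- `P` is an almost prime (two-sided) ideal. -/
def IsAlmostPrimeTwoSided [NonUnitalRing R] (P : AddSubgroup R) : Prop :=
  IsTwoSidedIdealSub P ∧ P ≠ ⊤ ∧
    ∀ A B : AddSubgroup R, IsTwoSidedIdealSub A → IsTwoSidedIdealSub B →
      idealMul A B ≤ P → ¬ idealMul A B ≤ idealMul P P → A ≤ P ∨ B ≤ P

/-! A two-sided ideal is in particular a right ideal, which gives one direction. For the other,
replace right ideals `A`, `B` by the two-sided ideals `RA ⊇ A`, `RB ⊇ B`. Since `A` is a right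
ideal, `(RA)(RB) ⊆ R(A(RB)) ⊆ R(AB) ⊆ P`, while `(RA)(RB) ⊇ AB ⊄ P²`, so the two-sided condition
applies to `RA`, `RB`. -/

lemma IsTwoSidedIdealSub.isRightIdeal [NonUnitalRing R] {P : AddSubgroup R}
    (hP : IsTwoSidedIdealSub P) : IsRightIdeal P :=
  fun a ha r => (hP a ha r).1

lemma idealMul_le_iff [NonUnitalRing R] {A B P : AddSubgroup R} :
    idealMul A B ≤ P ↔ ∀ a ∈ A, ∀ b ∈ B, a * b ∈ P := by
  refine (AddSubgroup.closure_le P).trans ⟨fun h a ha b hb => h ⟨a, ha, b, hb, rfl⟩, ?_⟩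
  rintro h x ⟨a, ha, b, hb, rfl⟩
  exact h a ha b hb

lemma mul_mem_of_mem_idealMul [NonUnitalRing R] {A B : AddSubgroup R} {a b : R}
    (ha : a ∈ A) (hb : b ∈ B) : a * b ∈ idealMul A B :=
  AddSubgroup.subset_closure ⟨a, ha, b, hb, rfl⟩

lemma idealMul_mono [NonUnitalRing R] {A A' B B' : AddSubgroup R}
    (hA : A ≤ A') (hB : B ≤ B') : idealMul A B ≤ idealMul A' B' :=
  idealMul_le_iff.2 fun _ ha _ hb => mul_mem_of_mem_idealMul (hA ha) (hB hb)

lemma mul_mem_of_mem_closure_left [NonUnitalRing R] {S : Set R} {T : AddSubgroup R} {a x : R}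
    (h : ∀ s ∈ S, a * s ∈ T) (hx : x ∈ AddSubgroup.closure S) : a * x ∈ T :=
  ((AddSubgroup.closure_le (T.comap (AddMonoidHom.mulLeft a))).2 h) hx

lemma mul_mem_of_mem_closure_right [NonUnitalRing R] {S : Set R} {T : AddSubgroup R} {a x : R}
    (h : ∀ s ∈ S, s * a ∈ T) (hx : x ∈ AddSubgroup.closure S) : x * a ∈ T :=
  ((AddSubgroup.closure_le (T.comap (AddMonoidHom.mulRight a))).2 h) hx

lemma le_idealMul_top [Ring R] (A : AddSubgroup R) : A ≤ idealMul ⊤ A := fun a ha => by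
  simpa using mul_mem_of_mem_idealMul (AddSubgroup.mem_top 1) ha

lemma IsTwoSidedIdealSub.idealMul_top_le [NonUnitalRing R] {P : AddSubgroup R}
    (hP : IsTwoSidedIdealSub P) : idealMul ⊤ P ≤ P :=
  idealMul_le_iff.2 fun r _ a ha => (hP a ha r).2

lemma IsRightIdeal.isTwoSidedIdealSub_idealMul_top [NonUnitalRing R] {A : AddSubgroup R}
    (hA : IsRightIdeal A) : IsTwoSidedIdealSub (idealMul ⊤ A) := by
  intro x hx s
  constructor
  · refine mul_mem_of_mem_closure_right ?_ hx
    rintro _ ⟨r, -, a, ha, rfl⟩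
    simpa only [mul_assoc] using mul_mem_of_mem_idealMul (AddSubgroup.mem_top r) (hA a ha s)
  · refine mul_mem_of_mem_closure_left ?_ hx
    rintro _ ⟨r, -, a, ha, rfl⟩
    simpa only [← mul_assoc] using mul_mem_of_mem_idealMul (AddSubgroup.mem_top (s * r)) ha

lemma idealMul_idealMul_top_left_le [NonUnitalRing R] (A B : AddSubgroup R) :
    idealMul (idealMul ⊤ A) B ≤ idealMul ⊤ (idealMul A B) := by
  refine idealMul_le_iff.2 fun x hx b hb => mul_mem_of_mem_closure_right ?_ hx
  rintro _ ⟨r, -, a, ha, rfl⟩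
  simpa only [mul_assoc] using
    mul_mem_of_mem_idealMul (AddSubgroup.mem_top r) (mul_mem_of_mem_idealMul ha hb)

lemma IsRightIdeal.idealMul_idealMul_top_right_le [NonUnitalRing R] {A : AddSubgroup R}
    (hA : IsRightIdeal A) (B : AddSubgroup R) : idealMul A (idealMul ⊤ B) ≤ idealMul A B := by
  refine idealMul_le_iff.2 fun a ha y hy => mul_mem_of_mem_closure_left ?_ hy
  rintro _ ⟨r, -, b, hb, rfl⟩
  simpa only [← mul_assoc] using mul_mem_of_mem_idealMul (hA a ha r) hb

lemma IsRightIdeal.idealMul_idealMul_top_le [NonUnitalRing R] {A B P : AddSubgroup R}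
    (hA : IsRightIdeal A) (hP : IsTwoSidedIdealSub P) (hAB : idealMul A B ≤ P) :
    idealMul (idealMul ⊤ A) (idealMul ⊤ B) ≤ P :=
  calc idealMul (idealMul ⊤ A) (idealMul ⊤ B)
      ≤ idealMul ⊤ (idealMul A (idealMul ⊤ B)) := idealMul_idealMul_top_left_le _ _
    _ ≤ idealMul ⊤ P := idealMul_mono le_rfl ((hA.idealMul_idealMul_top_right_le B).trans hAB)
    _ ≤ P := hP.idealMul_top_le

lemma IsAlmostPrimeRight.isAlmostPrimeTwoSided [NonUnitalRing R] {P : AddSubgroup R}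
    (h : IsAlmostPrimeRight P) (hP : IsTwoSidedIdealSub P) : IsAlmostPrimeTwoSided P :=
  ⟨hP, h.2.1, fun A B hA hB => h.2.2 A B hA.isRightIdeal hB.isRightIdeal⟩

lemma IsAlmostPrimeTwoSided.isAlmostPrimeRight [Ring R] {P : AddSubgroup R}
    (h : IsAlmostPrimeTwoSided P) : IsAlmostPrimeRight P := by
  obtain ⟨hP, hproper, hprime⟩ := h
  refine ⟨hP.isRightIdeal, hproper, fun A B hA hB hAB hAB' => ?_⟩
  have hle : idealMul A B ≤ idealMul (idealMul ⊤ A) (idealMul ⊤ B) :=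
    idealMul_mono (le_idealMul_top A) (le_idealMul_top B)
  refine (hprime _ _ hA.isTwoSidedIdealSub_idealMul_top hB.isTwoSidedIdealSub_idealMul_top
    (hA.idealMul_idealMul_top_le hP hAB) fun h => hAB' (hle.trans h)).imp ?_ ?_
  · exact (le_idealMul_top A).trans
  · exact (le_idealMul_top B).trans

theorem almostPrimeRight_iff_almostPrimeTwoSided_general [Ring R] (P : AddSubgroup R)
    (hP : IsTwoSidedIdealSub P) :
    IsAlmostPrimeRight P ↔ IsAlmostPrimeTwoSided P :=
  ⟨fun h => h.isAlmostPrimeTwoSided hP, IsAlmostPrimeTwoSided.isAlmostPrimeRight⟩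

/-- For a two-sided ideal `P` of a ring with identity, `P` is an almost prime right
ideal iff `P` is an almost prime (two-sided) ideal. -/
theorem almostPrimeRight_iff_almostPrimeTwoSided [Ring R] (P : AddSubgroup R)
    (hP : IsTwoSidedIdealSub P) (hproper : P ≠ ⊤) :
    IsAlmostPrimeRight P ↔ IsAlmostPrimeTwoSided P :=
  almostPrimeRight_iff_almostPrimeTwoSided_general P hP
end

section
/- Let R be a ring with identity and P a two-sided ideal. P is almost prime if and only if for every a ∈ R \ P, the colon ideal P : ⟨a⟩ equals P ∪ (P² : ⟨a⟩) and (P : ⟨a⟩)* equals P ∪ (P² : ⟨a⟩)*, where ⟨a⟩ = RaR is the ideal generated by a. -/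
variable {R : Type*}

/-- The two-sided ideal `RaR` generated by `a` in a ring with identity. -/
def tIdeal [Ring R] (a : R) : AddSubgroup R :=
  AddSubgroup.closure {x : R | ∃ r s : R, x = r * a * s}

namespace AlmostPrimeAux

variable [Ring R]

lemma mem_tIdeal_self (a : R) : a ∈ tIdeal a :=
  AddSubgroup.subset_closure ⟨1, 1, by simp⟩

lemma closure_forall {s : Set R} {P : AddSubgroup R} (f : R →+ R)
    (h : ∀ x ∈ s, f x ∈ P) : ∀ y ∈ AddSubgroup.closure s, f y ∈ P := fun y hy =>
  (AddSubgroup.closure_le (P.comap f)).2 h hy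

/-- If `(r*a*s)*x ∈ P` for all `r s`, then `y*x ∈ P` for all `y ∈ ⟨a⟩`. -/
lemma tIdeal_mul {a x : R} {P : AddSubgroup R}
    (h : ∀ r s : R, (r * a * s) * x ∈ P) : ∀ y ∈ tIdeal a, y * x ∈ P := by
  intro y hy
  exact closure_forall (AddMonoidHom.mulRight x)
    (by rintro z ⟨r, s, rfl⟩; exact h r s) y hy

lemma mul_tIdeal {a x : R} {P : AddSubgroup R}
    (h : ∀ r s : R, x * (r * a * s) ∈ P) : ∀ y ∈ tIdeal a, x * y ∈ P := by
  intro y hy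
  exact closure_forall (AddMonoidHom.mulLeft x)
    (by rintro z ⟨r, s, rfl⟩; exact h r s) y hy

lemma idealMul_le {A B P : AddSubgroup R} (h : ∀ a ∈ A, ∀ b ∈ B, a * b ∈ P) :
    idealMul A B ≤ P := by
  refine (AddSubgroup.closure_le P).2 ?_
  rintro z ⟨a, ha, b, hb, rfl⟩
  exact h a ha b hb

lemma mul_mem_idealMul {A B : AddSubgroup R} {a b : R} (ha : a ∈ A) (hb : b ∈ B) :
    a * b ∈ idealMul A B :=
  AddSubgroup.subset_closure ⟨a, ha, b, hb, rfl⟩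

lemma sq_le {P : AddSubgroup R} (hP : IsTwoSidedIdealSub P) : idealMul P P ≤ P :=
  idealMul_le fun a ha b _ => (hP a ha b).1

lemma tIdeal_twoSided (a : R) : IsTwoSidedIdealSub (tIdeal a) := by
  intro x hx t
  constructor
  · exact closure_forall (AddMonoidHom.mulRight t)
      (by rintro z ⟨r, s, rfl⟩
          exact AddSubgroup.subset_closure ⟨r, s * t, by simp [mul_assoc]⟩) x hx
  · exact closure_forall (AddMonoidHom.mulLeft t)
      (by rintro z ⟨r, s, rfl⟩
          exact AddSubgroup.subset_closure ⟨t * r, s, by simp [mul_assoc]⟩) x hx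

lemma tIdeal_le {A : AddSubgroup R} (hA : IsTwoSidedIdealSub A) {a : R} (ha : a ∈ A) :
    tIdeal a ≤ A := by
  refine (AddSubgroup.closure_le A).2 ?_
  rintro z ⟨r, s, rfl⟩
  exact (hA (r * a) (hA a ha r).2 s).1

end AlmostPrimeAux

/-- A two-sided ideal `P` of a ring with identity is almost prime iff for every
`a ∈ R \ P`, `P : ⟨a⟩ = P ∪ (P² : ⟨a⟩)` and `(P : ⟨a⟩)* = P ∪ (P² : ⟨a⟩)*`. -/
theorem almostPrime_iff_colon_union [Ring R] (P : AddSubgroup R)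
    (hP : IsTwoSidedIdealSub P) (hproper : P ≠ ⊤) :
    IsAlmostPrimeTwoSided P ↔
      ∀ a : R, a ∉ P →
        ({x : R | ∀ y ∈ tIdeal a, y * x ∈ P} =
            (P : Set R) ∪ {x : R | ∀ y ∈ tIdeal a, y * x ∈ idealMul P P}) ∧
        ({x : R | ∀ y ∈ tIdeal a, x * y ∈ P} =
            (P : Set R) ∪ {x : R | ∀ y ∈ tIdeal a, x * y ∈ idealMul P P}) := by
  open AlmostPrimeAux in
  constructor
  · rintro ⟨-, -, hap⟩ a ha
    constructor
    · ext x
      simp only [Set.mem_setOf_eq, Set.mem_union, SetLike.mem_coe]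
      constructor
      · intro hx
        by_cases hxP : x ∈ P
        · exact Or.inl hxP
        · right
          by_cases hle : idealMul (tIdeal a) (tIdeal x) ≤ idealMul P P
          · exact fun y hy => hle (mul_mem_idealMul hy (mem_tIdeal_self x))
          · have hPle : idealMul (tIdeal a) (tIdeal x) ≤ P := by
              refine idealMul_le fun u hu v hv => ?_
              refine closure_forall (AddMonoidHom.mulLeft u) ?_ v hv
              rintro z ⟨r, s, rfl⟩
              have h1 : (u * r) * x ∈ P := hx _ ((tIdeal_twoSided a) u hu r).1
              have h2 := (hP _ h1 s).1
              simpa [mul_assoc] using h2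
            rcases hap _ _ (tIdeal_twoSided a) (tIdeal_twoSided x) hPle hle with h | h
            · exact absurd (h (mem_tIdeal_self a)) ha
            · exact absurd (h (mem_tIdeal_self x)) hxP
      · rintro (hxP | hx) y hy
        · exact (hP x hxP y).2
        · exact sq_le hP (hx y hy)
    · ext x
      simp only [Set.mem_setOf_eq, Set.mem_union, SetLike.mem_coe]
      constructor
      · intro hx
        by_cases hxP : x ∈ P
        · exact Or.inl hxP
        · right
          by_cases hle : idealMul (tIdeal x) (tIdeal a) ≤ idealMul P P
          · exact fun y hy => hle (mul_mem_idealMul (mem_tIdeal_self x) hy)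
          · have hPle : idealMul (tIdeal x) (tIdeal a) ≤ P := by
              refine idealMul_le fun u hu v hv => ?_
              refine closure_forall (AddMonoidHom.mulRight v) ?_ u hu
              rintro z ⟨r, s, rfl⟩
              have h1 : x * (s * v) ∈ P := hx _ ((tIdeal_twoSided a) v hv s).2
              have h2 := (hP _ h1 r).2
              simpa [mul_assoc] using h2
            rcases hap _ _ (tIdeal_twoSided x) (tIdeal_twoSided a) hPle hle with h | h
            · exact absurd (h (mem_tIdeal_self x)) hxP
            · exact absurd (h (mem_tIdeal_self a)) ha
      · rintro (hxP | hx) y hy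
        · exact (hP x hxP y).1
        · exact sq_le hP (hx y hy)
  · intro h
    refine ⟨hP, hproper, fun A B hA hB hAB hnsq => ?_⟩
    by_contra hcon
    push_neg at hcon
    obtain ⟨a1, ha1A, ha1P⟩ := SetLike.not_le_iff_exists.1 hcon.1
    obtain ⟨b1, hb1B, hb1P⟩ := SetLike.not_le_iff_exists.1 hcon.2
    obtain ⟨a0, ha0, b0, hb0, hnot⟩ : ∃ a0 ∈ A, ∃ b0 ∈ B, a0 * b0 ∉ idealMul P P := by
      by_contra hc
      push_neg at hc
      exact hnsq (idealMul_le hc)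
    have key : ∀ a ∈ A, ∀ b ∈ B, ∀ y ∈ tIdeal a, y * b ∈ P := by
      intro a haA b hbB
      refine tIdeal_mul fun r s => ?_
      have h1 : (a * s) * b ∈ P := hAB (mul_mem_idealMul (hA a haA s).1 hbB)
      have h2 := (hP _ h1 r).2
      simpa [mul_assoc] using h2
    have key2 : ∀ a ∈ A, a ∉ P → ∀ b ∈ B, b ∉ P → a * b ∈ idealMul P P := by
      intro a haA haP b hbB hbP
      have hb : b ∈ (P : Set R) ∪ {x | ∀ y ∈ tIdeal a, y * x ∈ idealMul P P} := by
        rw [← (h a haP).1]; exact key a haA b hbB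
      rcases hb with hb | hb
      · exact absurd hb hbP
      · exact hb a (mem_tIdeal_self a)
    have hb0P : b0 ∈ P := by
      by_contra hb0P
      by_cases ha0P : a0 ∈ P
      · have hsum : a1 + a0 ∉ P := fun hc => ha1P (by simpa using P.sub_mem hc ha0P)
        have h2 : (a1 + a0) * b0 ∈ idealMul P P :=
          key2 _ (A.add_mem ha1A ha0) hsum _ hb0 hb0P
        have h3 : a1 * b0 ∈ idealMul P P := key2 _ ha1A ha1P _ hb0 hb0P
        have h4 : a0 * b0 ∈ idealMul P P := by
          simpa [add_mul] using (idealMul P P).sub_mem h2 h3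
        exact hnot h4
      · exact hnot (key2 _ ha0 ha0P _ hb0 hb0P)
    have ha0P : a0 ∉ P := fun hc => hnot (mul_mem_idealMul hc hb0P)
    have h4 : a0 * b1 ∈ idealMul P P := key2 _ ha0 ha0P _ hb1B hb1P
    have hsum : b1 + b0 ∉ P := fun hc => hb1P (by simpa using P.sub_mem hc hb0P)
    have h5 : a0 * (b1 + b0) ∈ idealMul P P :=
      key2 _ ha0 ha0P _ (B.add_mem hb1B hb0) hsum
    have h6 : a0 * b0 ∈ idealMul P P := by
      simpa [mul_add] using (idealMul P P).sub_mem h5 h4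
    exact hnot h6
end

section
/- Let R be a ring with identity and P a two-sided ideal. P is almost prime if and only if for every a ∈ R \ P, (P : ⟨a⟩ = P or P : ⟨a⟩ = P² : ⟨a⟩) and ((P : ⟨a⟩)* = P or (P : ⟨a⟩)* = (P² : ⟨a⟩)*). -/
variable {R : Type*}

section Aux

variable [Ring R]

lemma mem_idealMul_self {A B : AddSubgroup R} {a b : R} (ha : a ∈ A) (hb : b ∈ B) :
    a * b ∈ idealMul A B :=
  AddSubgroup.subset_closure ⟨a, ha, b, hb, rfl⟩

lemma idealMul_le {A B S : AddSubgroup R} (h : ∀ a ∈ A, ∀ b ∈ B, a * b ∈ S) :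
    idealMul A B ≤ S := by
  apply (AddSubgroup.closure_le _).2
  rintro x ⟨a, ha, b, hb, rfl⟩
  exact h a ha b hb

lemma mem_tIdeal_self (a : R) : a ∈ tIdeal a :=
  AddSubgroup.subset_closure ⟨1, 1, by simp⟩

lemma forall_tIdeal_mul_left {P : AddSubgroup R} {a x : R}
    (h : ∀ r s : R, r * a * s * x ∈ P) : ∀ y ∈ tIdeal a, y * x ∈ P := by
  intro y hy
  have hle : tIdeal a ≤ P.comap (AddMonoidHom.mulRight x) := by
    apply (AddSubgroup.closure_le _).2
    rintro z ⟨r, s, rfl⟩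
    exact h r s
  exact hle hy

lemma forall_tIdeal_mul_right {P : AddSubgroup R} {a x : R}
    (h : ∀ r s : R, x * (r * a * s) ∈ P) : ∀ y ∈ tIdeal a, x * y ∈ P := by
  intro y hy
  have hle : tIdeal a ≤ P.comap (AddMonoidHom.mulLeft x) := by
    apply (AddSubgroup.closure_le _).2
    rintro z ⟨r, s, rfl⟩
    exact h r s
  exact hle hy

lemma tIdeal_mul_mem_right {a y : R} (hy : y ∈ tIdeal a) (r : R) : y * r ∈ tIdeal a := by
  refine forall_tIdeal_mul_left (P := tIdeal a) (x := r) (fun u s => ?_) y hy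
  exact AddSubgroup.subset_closure ⟨u, s * r, by rw [mul_assoc]⟩

lemma tIdeal_mul_mem_left {a y : R} (hy : y ∈ tIdeal a) (r : R) : r * y ∈ tIdeal a := by
  refine forall_tIdeal_mul_right (P := tIdeal a) (x := r) (fun u s => ?_) y hy
  exact AddSubgroup.subset_closure ⟨r * u, s, by rw [mul_assoc, mul_assoc, mul_assoc]⟩

lemma tIdeal_isTwoSided (a : R) : IsTwoSidedIdealSub (tIdeal a) :=
  fun y hy r => ⟨tIdeal_mul_mem_right hy r, tIdeal_mul_mem_left hy r⟩

end Aux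

/-- A two-sided ideal `P` of a ring with identity is almost prime iff for every
`a ∈ R \ P`, (`P : ⟨a⟩ = P` or `P : ⟨a⟩ = P² : ⟨a⟩`) and
(`(P : ⟨a⟩)* = P` or `(P : ⟨a⟩)* = (P² : ⟨a⟩)*`). -/
theorem almostPrime_iff_colon_or [Ring R] (P : AddSubgroup R)
    (hP : IsTwoSidedIdealSub P) (hproper : P ≠ ⊤) :
    IsAlmostPrimeTwoSided P ↔
      ∀ a : R, a ∉ P →
        ({x : R | ∀ y ∈ tIdeal a, y * x ∈ P} = (P : Set R) ∨
          {x : R | ∀ y ∈ tIdeal a, y * x ∈ P} =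
            {x : R | ∀ y ∈ tIdeal a, y * x ∈ idealMul P P}) ∧
        ({x : R | ∀ y ∈ tIdeal a, x * y ∈ P} = (P : Set R) ∨
          {x : R | ∀ y ∈ tIdeal a, x * y ∈ P} =
            {x : R | ∀ y ∈ tIdeal a, x * y ∈ idealMul P P}) := by
  have hPsq : idealMul P P ≤ P := idealMul_le (fun p hp q _ => (hP p hp q).1)
  constructor
  · rintro ⟨-, -, hmain⟩ a ha
    -- key claims for elements outside P
    have key1 : ∀ x : R, (∀ y ∈ tIdeal a, y * x ∈ P) → x ∉ P →
        ∀ y ∈ tIdeal a, y * x ∈ idealMul P P := by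
      intro x hx hxP
      by_contra hc
      push_neg at hc
      obtain ⟨y, hy, hyx⟩ := hc
      have hAB : idealMul (tIdeal a) (tIdeal x) ≤ P := by
        apply idealMul_le
        intro u hu v hv
        refine forall_tIdeal_mul_right (fun r s => ?_) v hv
        have h1 : u * r ∈ tIdeal a := tIdeal_mul_mem_right hu r
        have h2 : u * r * x ∈ P := hx _ h1
        have h3 : u * r * x * s ∈ P := (hP _ h2 s).1
        rw [show u * (r * x * s) = u * r * x * s by rw [mul_assoc, mul_assoc, mul_assoc]]
        exact h3
      have hnsq : ¬ idealMul (tIdeal a) (tIdeal x) ≤ idealMul P P :=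
        fun hle => hyx (hle (mem_idealMul_self hy (mem_tIdeal_self x)))
      rcases hmain _ _ (tIdeal_isTwoSided a) (tIdeal_isTwoSided x) hAB hnsq with h | h
      · exact ha (h (mem_tIdeal_self a))
      · exact hxP (h (mem_tIdeal_self x))
    have key2 : ∀ x : R, (∀ y ∈ tIdeal a, x * y ∈ P) → x ∉ P →
        ∀ y ∈ tIdeal a, x * y ∈ idealMul P P := by
      intro x hx hxP
      by_contra hc
      push_neg at hc
      obtain ⟨y, hy, hyx⟩ := hc
      have hAB : idealMul (tIdeal x) (tIdeal a) ≤ P := by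
        apply idealMul_le
        intro u hu v hv
        revert u hu
        refine forall_tIdeal_mul_left (fun r s => ?_)
        have h1 : s * v ∈ tIdeal a := tIdeal_mul_mem_left hv s
        have h2 : x * (s * v) ∈ P := hx _ h1
        have h3 : r * (x * (s * v)) ∈ P := (hP _ h2 r).2
        rw [show r * x * s * v = r * (x * (s * v)) by rw [mul_assoc, mul_assoc]]
        exact h3
      have hnsq : ¬ idealMul (tIdeal x) (tIdeal a) ≤ idealMul P P :=
        fun hle => hyx (hle (mem_idealMul_self (mem_tIdeal_self x) hy))
      rcases hmain _ _ (tIdeal_isTwoSided x) (tIdeal_isTwoSided a) hAB hnsq with h | h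
      · exact hxP (h (mem_tIdeal_self x))
      · exact ha (h (mem_tIdeal_self a))
    constructor
    · by_cases hL : {x : R | ∀ y ∈ tIdeal a, y * x ∈ P} = (P : Set R)
      · exact Or.inl hL
      right
      have hsub : (P : Set R) ⊆ {x : R | ∀ y ∈ tIdeal a, y * x ∈ P} :=
        fun x hx y _ => (hP x hx y).2
      have hex : ∃ x₀ : R, (∀ y ∈ tIdeal a, y * x₀ ∈ P) ∧ x₀ ∉ P := by
        by_contra hc
        push_neg at hc
        exact hL (Set.Subset.antisymm (fun x hx => hc x hx) hsub)
      obtain ⟨x₀, hx₀L, hx₀P⟩ := hex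
      have hx₀2 := key1 x₀ hx₀L hx₀P
      ext x
      simp only [Set.mem_setOf_eq]
      constructor
      · intro hx
        by_cases hxP : x ∈ P
        · intro y hy
          have h1 : ∀ y ∈ tIdeal a, y * (x + x₀) ∈ P := by
            intro y hy
            rw [mul_add]
            exact P.add_mem (hx y hy) (hx₀L y hy)
          have hxx₀ : x + x₀ ∉ P := by
            intro h
            exact hx₀P (by simpa using P.sub_mem h hxP)
          have h2 := key1 _ h1 hxx₀ y hy
          have h3 := (idealMul P P).sub_mem h2 (hx₀2 y hy)
          simpa [mul_add] using h3
        · exact key1 x hx hxP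
      · intro hx y hy
        exact hPsq (hx y hy)
    · by_cases hL : {x : R | ∀ y ∈ tIdeal a, x * y ∈ P} = (P : Set R)
      · exact Or.inl hL
      right
      have hsub : (P : Set R) ⊆ {x : R | ∀ y ∈ tIdeal a, x * y ∈ P} :=
        fun x hx y _ => (hP x hx y).1
      have hex : ∃ x₀ : R, (∀ y ∈ tIdeal a, x₀ * y ∈ P) ∧ x₀ ∉ P := by
        by_contra hc
        push_neg at hc
        exact hL (Set.Subset.antisymm (fun x hx => hc x hx) hsub)
      obtain ⟨x₀, hx₀L, hx₀P⟩ := hex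
      have hx₀2 := key2 x₀ hx₀L hx₀P
      ext x
      simp only [Set.mem_setOf_eq]
      constructor
      · intro hx
        by_cases hxP : x ∈ P
        · intro y hy
          have h1 : ∀ y ∈ tIdeal a, (x + x₀) * y ∈ P := by
            intro y hy
            rw [add_mul]
            exact P.add_mem (hx y hy) (hx₀L y hy)
          have hxx₀ : x + x₀ ∉ P := by
            intro h
            exact hx₀P (by simpa using P.sub_mem h hxP)
          have h2 := key2 _ h1 hxx₀ y hy
          have h3 := (idealMul P P).sub_mem h2 (hx₀2 y hy)
          simpa [add_mul] using h3
        · exact key2 x hx hxP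
      · intro hx y hy
        exact hPsq (hx y hy)
  · intro hcond
    refine ⟨hP, hproper, ?_⟩
    intro A B hA hB hAB hn
    by_contra hc
    push_neg at hc
    obtain ⟨hAP, hBP⟩ := hc
    obtain ⟨a₀, ha₀A, ha₀P⟩ := SetLike.not_le_iff_exists.1 hAP
    obtain ⟨b₀, hb₀B, hb₀P⟩ := SetLike.not_le_iff_exists.1 hBP
    have C1 : ∀ a ∈ A, a ∉ P → ∀ b ∈ B, b ∉ P → a * b ∈ idealMul P P := by
      intro a haA haP b hbB hbP
      have hbL : ∀ y ∈ tIdeal a, y * b ∈ P := by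
        apply forall_tIdeal_mul_left
        intro r s
        have h1 : r * a ∈ A := (hA a haA r).2
        have h2 : r * a * s ∈ A := (hA _ h1 s).1
        exact hAB (mem_idealMul_self h2 hbB)
      rcases (hcond a haP).1 with h | h
      · have hb : b ∈ {x : R | ∀ y ∈ tIdeal a, y * x ∈ P} := hbL
        rw [h] at hb
        exact absurd hb hbP
      · have hb : b ∈ {x : R | ∀ y ∈ tIdeal a, y * x ∈ P} := hbL
        rw [h] at hb
        exact hb a (mem_tIdeal_self a)
    have C2 : ∀ a ∈ A, ∀ b ∈ B, b ∉ P → a * b ∈ idealMul P P := by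
      intro a haA b hbB hbP
      by_cases haP : a ∈ P
      · have haa₀ : a + a₀ ∉ P := by
          intro h
          exact ha₀P (by simpa using P.sub_mem h haP)
        have h1 := C1 _ (A.add_mem haA ha₀A) haa₀ b hbB hbP
        have h2 := C1 _ ha₀A ha₀P b hbB hbP
        have h3 := (idealMul P P).sub_mem h1 h2
        simpa [add_mul] using h3
      · exact C1 a haA haP b hbB hbP
    have C3 : ∀ a ∈ A, ∀ b ∈ B, a * b ∈ idealMul P P := by
      intro a haA b hbB
      by_cases hbP : b ∈ P
      · have hbb₀ : b + b₀ ∉ P := by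
          intro h
          exact hb₀P (by simpa using P.sub_mem h hbP)
        have h1 := C2 a haA _ (B.add_mem hbB hb₀B) hbb₀
        have h2 := C2 a haA b₀ hb₀B hb₀P
        have h3 := (idealMul P P).sub_mem h1 h2
        simpa [mul_add] using h3
      · exact C2 a haA b hbB hbP
    exact hn (idealMul_le C3)
end

section
/- Let R be a ring with identity and P a right ideal of R such that (P² : P) ⊆ P, where P² : P = {x ∈ R : Px ⊆ P²}. Then P is a prime right ideal if and only if P is an almost prime right ideal. -/
variable {R : Type*}

/-- `P` is a prime right ideal. -/
def IsPrimeRight [NonUnitalRing R] (P : AddSubgroup R) : Prop :=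
  IsRightIdeal P ∧ P ≠ ⊤ ∧
    ∀ A B : AddSubgroup R, IsRightIdeal A → IsRightIdeal B →
      idealMul A B ≤ P → A ≤ P ∨ B ≤ P

/-- If `P` is a right ideal of a ring with identity such that `(P² : P) ⊆ P`,
then `P` is prime iff `P` is almost prime. -/
theorem prime_iff_almostPrime_of_colon [Ring R] (P : AddSubgroup R)
    (hP : IsRightIdeal P)
    (hcolon : ∀ x : R, (∀ p ∈ P, p * x ∈ idealMul P P) → x ∈ P) :
    IsPrimeRight P ↔ IsAlmostPrimeRight P := by
  constructor
  · rintro ⟨h1, h2, h3⟩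
    exact ⟨h1, h2, fun A B hA hB hAB _ => h3 A B hA hB hAB⟩
  · rintro ⟨h1, h2, h3⟩
    refine ⟨h1, h2, fun A B hA hB hAB => ?_⟩
    by_cases hBP : B ≤ P
    · exact Or.inr hBP
    left
    have hC : IsRightIdeal (A ⊔ P) := by
      intro a ha r
      rw [AddSubgroup.mem_sup] at ha ⊢
      obtain ⟨y, hy, z, hz, rfl⟩ := ha
      exact ⟨y * r, hA y hy r, z * r, hP z hz r, (add_mul y z r).symm⟩
    have hle : idealMul (A ⊔ P) B ≤ P := by
      rw [idealMul, AddSubgroup.closure_le]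
      rintro x ⟨c, hc, b, hb, rfl⟩
      rw [AddSubgroup.mem_sup] at hc
      obtain ⟨y, hy, z, hz, rfl⟩ := hc
      rw [add_mul]
      exact add_mem (hAB (AddSubgroup.subset_closure ⟨y, hy, b, hb, rfl⟩)) (hP z hz b)
    have hnot : ¬ idealMul (A ⊔ P) B ≤ idealMul P P := by
      intro hle2
      apply hBP
      intro b hb
      apply hcolon
      intro p hp
      exact hle2 (AddSubgroup.subset_closure ⟨p, le_sup_right (a := A) hp, b, hb, rfl⟩)
    rcases h3 (A ⊔ P) B hC hB hle hnot with h | h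
    · exact le_sup_left.trans h
    · exact absurd h hBP
end

section
/- Let P be a minimal right ideal of a ring R with identity. If P is an almost prime right ideal but not an idempotent ideal, then P is a weakly prime right ideal. -/
/-! Since `P²` is a right ideal contained in `P`, minimality and non-idempotence force `P² = 0`.
Then the side condition `AB ⊄ P²` of almost primeness reads `AB ≠ 0`, which is weak primeness. -/

variable {R : Type*}

/-- `P` is a weakly prime right ideal. -/
def IsWeaklyPrimeRight [NonUnitalRing R] (P : AddSubgroup R) : Prop :=
  IsRightIdeal P ∧ P ≠ ⊤ ∧
    ∀ A B : AddSubgroup R, IsRightIdeal A → IsRightIdeal B →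
      idealMul A B ≠ ⊥ → idealMul A B ≤ P → A ≤ P ∨ B ≤ P

section NonUnitalRing

variable [NonUnitalRing R]

theorem idealMul_le_left {A : AddSubgroup R} (hA : IsRightIdeal A) (B : AddSubgroup R) :
    idealMul A B ≤ A :=
  (AddSubgroup.closure_le _).2 fun _ ⟨a, ha, b, _, hx⟩ => hx ▸ hA a ha b

theorem isRightIdeal_idealMul (A : AddSubgroup R) {B : AddSubgroup R} (hB : IsRightIdeal B) :
    IsRightIdeal (idealMul A B) := by
  intro x hx r
  induction hx using AddSubgroup.closure_induction with
  | mem x hx =>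
    obtain ⟨a, ha, b, hb, rfl⟩ := hx
    exact AddSubgroup.subset_closure ⟨a, ha, b * r, hB b hb r, mul_assoc a b r⟩
  | zero => rw [zero_mul]; exact (idealMul A B).zero_mem
  | add x y _ _ hx hy => simpa only [add_mul] using (idealMul A B).add_mem hx hy
  | neg x _ hx => simpa only [neg_mul] using (idealMul A B).neg_mem hx

theorem idealMul_self_eq_bot_of_minimal {P : AddSubgroup R} (hP : IsRightIdeal P)
    (hmin : ∀ I : AddSubgroup R, IsRightIdeal I → I ≤ P → I = ⊥ ∨ I = P)
    (hnotidem : idealMul P P ≠ P) : idealMul P P = ⊥ :=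
  (hmin _ (isRightIdeal_idealMul P hP) (idealMul_le_left hP P)).resolve_right hnotidem

theorem IsAlmostPrimeRight.isWeaklyPrimeRight_of_idealMul_self_eq_bot {P : AddSubgroup R}
    (hP : IsAlmostPrimeRight P) (hsq : idealMul P P = ⊥) : IsWeaklyPrimeRight P := by
  obtain ⟨hPright, hPtop, hprime⟩ := hP
  refine ⟨hPright, hPtop, fun A B hA hB hAB hABP => hprime A B hA hB hABP ?_⟩
  rwa [hsq, le_bot_iff]

end NonUnitalRing

theorem minimal_almostPrime_not_idempotent_weaklyPrime_general [Ring R] (P : AddSubgroup R)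
    (hmin : ∀ I : AddSubgroup R, IsRightIdeal I → I ≤ P → I = ⊥ ∨ I = P)
    (halmost : IsAlmostPrimeRight P) (hnotidem : idealMul P P ≠ P) :
    IsWeaklyPrimeRight P :=
  halmost.isWeaklyPrimeRight_of_idealMul_self_eq_bot
    (idealMul_self_eq_bot_of_minimal halmost.1 hmin hnotidem)

/-- A minimal right ideal of a ring with identity that is almost prime but not
idempotent is weakly prime. -/
theorem minimal_almostPrime_not_idempotent_weaklyPrime [Ring R] (P : AddSubgroup R)
    (hP : IsRightIdeal P) (hne : P ≠ ⊥)
    (hmin : ∀ I : AddSubgroup R, IsRightIdeal I → I ≤ P → I = ⊥ ∨ I = P)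
    (halmost : IsAlmostPrimeRight P) (hnotidem : idealMul P P ≠ P) :
    IsWeaklyPrimeRight P :=
  minimal_almostPrime_not_idempotent_weaklyPrime_general P hmin halmost hnotidem
end

section
/- Let R be a ring and P a two-sided ideal of R. Then P is an almost prime right ideal of R if and only if P/P² is a weakly prime right ideal of the quotient ring R/P². -/
variable {R : Type*}

/-- The ring congruence associated to a two-sided-ideal additive subgroup `N`. -/
def ringConOf [NonUnitalRing R] (N : AddSubgroup R)
    (hr : ∀ x ∈ N, ∀ r : R, x * r ∈ N) (hl : ∀ x ∈ N, ∀ r : R, r * x ∈ N) : RingCon R where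
  r x y := x - y ∈ N
  iseqv := ⟨fun x => by simpa using N.zero_mem, fun {x y} h => by simpa using N.neg_mem h,
    fun {x y z} h1 h2 => by simpa using N.add_mem h1 h2⟩
  add' := fun {a b c d} h1 h2 => by
    have h1' : a - b ∈ N := h1
    have h2' : c - d ∈ N := h2
    show a + c - (b + d) ∈ N
    rw [add_sub_add_comm]
    exact N.add_mem h1' h2'
  mul' := fun {a b c d} h1 h2 => by
    have h1' : a - b ∈ N := h1
    have h2' : c - d ∈ N := h2
    show a * c - b * d ∈ N
    have h3 : (a - b) * c ∈ N := hr _ h1' c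
    have h4 : b * (c - d) ∈ N := hl _ h2' b
    have h5 := N.add_mem h3 h4
    have e : (a - b) * c + b * (c - d) = a * c - b * d := by
      rw [sub_mul, mul_sub]; abel
    rwa [e] at h5

/-- The quotient map `R → R/N` as an additive monoid homomorphism. -/
def qmap [NonUnitalRing R] (c : RingCon R) : R →+ c.Quotient where
  toFun x := x
  map_zero' := rfl
  map_add' _ _ := rfl

theorem sq_right [NonUnitalRing R] (P : AddSubgroup R) (hP : IsTwoSidedIdealSub P) :
    ∀ x ∈ idealMul P P, ∀ r : R, x * r ∈ idealMul P P := by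
  intro x hx r
  induction hx using AddSubgroup.closure_induction with
  | mem y hy =>
    obtain ⟨a, ha, b, hb, rfl⟩ := hy
    exact AddSubgroup.subset_closure ⟨a, ha, b * r, (hP b hb r).1, mul_assoc a b r⟩
  | zero => simpa using (idealMul P P).zero_mem
  | add x y _ _ ihx ihy =>
    rw [add_mul]; exact (idealMul P P).add_mem ihx ihy
  | neg x _ ih =>
    rw [neg_mul]; exact (idealMul P P).neg_mem ih

theorem sq_left [NonUnitalRing R] (P : AddSubgroup R) (hP : IsTwoSidedIdealSub P) :
    ∀ x ∈ idealMul P P, ∀ r : R, r * x ∈ idealMul P P := by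
  intro x hx r
  induction hx using AddSubgroup.closure_induction with
  | mem y hy =>
    obtain ⟨a, ha, b, hb, rfl⟩ := hy
    exact AddSubgroup.subset_closure ⟨r * a, (hP a ha r).2, b, hb, (mul_assoc r a b).symm⟩
  | zero => simpa using (idealMul P P).zero_mem
  | add x y _ _ ihx ihy =>
    rw [mul_add]; exact (idealMul P P).add_mem ihx ihy
  | neg x _ ih =>
    rw [mul_neg]; exact (idealMul P P).neg_mem ih

/-!
A surjective ring map `f : R → S` with kernel `P²` identifies subgroups of `S` with subgroups of
`R` containing `P²`, respecting right ideals and products. Under `map f` / `comap f`, the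
condition "`AB ⊆ P` and `AB ⊄ P²`" in `R` becomes "`0 ≠ AB ⊆ P/P²`" in `S`.
-/

section Correspondence

variable {S : Type*} [NonUnitalRing R] [NonUnitalRing S]

theorem IsRightIdeal.comap (f : R →ₙ+* S) {B : AddSubgroup S} (hB : IsRightIdeal B) :
    IsRightIdeal (B.comap (f : R →+ S)) := by
  intro a ha r
  simpa only [AddSubgroup.mem_comap, AddMonoidHom.coe_coe, map_mul] using hB _ ha (f r)

theorem IsRightIdeal.map {f : R →ₙ+* S} (hf : Function.Surjective f) {A : AddSubgroup R}
    (hA : IsRightIdeal A) : IsRightIdeal (A.map (f : R →+ S)) := by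
  rintro - ⟨a, ha, rfl⟩ s
  obtain ⟨r, rfl⟩ := hf s
  exact ⟨a * r, hA a ha r, map_mul f a r⟩

theorem idealMul_le_self {P : AddSubgroup R} (hP : IsRightIdeal P) : idealMul P P ≤ P := by
  refine (AddSubgroup.closure_le _).mpr ?_
  rintro - ⟨a, ha, b, hb, rfl⟩
  exact hP a ha b

theorem map_idealMul (f : R →ₙ+* S) (A B : AddSubgroup R) :
    (idealMul A B).map (f : R →+ S) = idealMul (A.map (f : R →+ S)) (B.map (f : R →+ S)) := by
  rw [idealMul, AddMonoidHom.map_closure]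
  congr 1
  ext x
  constructor
  · rintro ⟨-, ⟨a, ha, b, hb, rfl⟩, rfl⟩
    exact ⟨f a, ⟨a, ha, rfl⟩, f b, ⟨b, hb, rfl⟩, map_mul f a b⟩
  · rintro ⟨-, ⟨a, ha, rfl⟩, -, ⟨b, hb, rfl⟩, rfl⟩
    exact ⟨a * b, ⟨a, ha, b, hb, rfl⟩, map_mul f a b⟩

theorem map_le_map_iff_of_ker_le (f : R →+ S) {A P : AddSubgroup R} (hP : f.ker ≤ P) :
    A.map f ≤ P.map f ↔ A ≤ P := by
  rw [AddSubgroup.map_le_map_iff, sup_eq_left.mpr hP]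

theorem isAlmostPrimeRight_of_isWeaklyPrimeRight_map {f : R →ₙ+* S}
    (hf : Function.Surjective f) {P : AddSubgroup R} (hP : IsRightIdeal P)
    (hker : (f : R →+ S).ker = idealMul P P) (hwp : IsWeaklyPrimeRight (P.map (f : R →+ S))) :
    IsAlmostPrimeRight P := by
  obtain ⟨-, hne_top, hprime⟩ := hwp
  have hkerP : (f : R →+ S).ker ≤ P := hker ▸ idealMul_le_self hP
  refine ⟨hP, fun htop => hne_top ?_, fun A B hA hB hle hnle => ?_⟩
  · rw [htop, AddSubgroup.map_top_of_surjective _ hf]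
  have hmap_le : idealMul (A.map (f : R →+ S)) (B.map (f : R →+ S)) ≤ P.map (f : R →+ S) := by
    rw [← map_idealMul]
    exact AddSubgroup.map_mono hle
  have hmap_ne : idealMul (A.map (f : R →+ S)) (B.map (f : R →+ S)) ≠ ⊥ := by
    rwa [← map_idealMul, Ne, AddSubgroup.map_eq_bot_iff, hker]
  simpa only [map_le_map_iff_of_ker_le _ hkerP] using
    hprime _ _ (hA.map hf) (hB.map hf) hmap_ne hmap_le

theorem isWeaklyPrimeRight_map_of_isAlmostPrimeRight {f : R →ₙ+* S}
    (hf : Function.Surjective f) {P : AddSubgroup R}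
    (hker : (f : R →+ S).ker = idealMul P P) (hap : IsAlmostPrimeRight P) :
    IsWeaklyPrimeRight (P.map (f : R →+ S)) := by
  obtain ⟨hP, hne_top, hprime⟩ := hap
  have hkerP : (f : R →+ S).ker ≤ P := hker ▸ idealMul_le_self hP
  have hmap_comap (B : AddSubgroup S) : (B.comap (f : R →+ S)).map (f : R →+ S) = B :=
    AddSubgroup.map_comap_eq_self_of_surjective (f := (f : R →+ S)) hf B
  refine ⟨hP.map hf, fun htop => hne_top ?_, fun A B hA hB hne hle => ?_⟩
  · rw [← AddSubgroup.comap_map_eq_self hkerP, htop, AddSubgroup.comap_top]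
  have hmap_mul : (idealMul (A.comap (f : R →+ S)) (B.comap (f : R →+ S))).map (f : R →+ S) =
      idealMul A B := by
    rw [map_idealMul, hmap_comap, hmap_comap]
  have hle' : idealMul (A.comap (f : R →+ S)) (B.comap (f : R →+ S)) ≤ P := by
    rwa [← map_le_map_iff_of_ker_le _ hkerP, hmap_mul]
  have hnle : ¬ idealMul (A.comap (f : R →+ S)) (B.comap (f : R →+ S)) ≤ idealMul P P := by
    rwa [← hker, ← AddSubgroup.map_eq_bot_iff, hmap_mul]
  rcases hprime _ _ (hA.comap f) (hB.comap f) hle' hnle with h | h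
  · exact .inl (hmap_comap A ▸ AddSubgroup.map_mono h)
  · exact .inr (hmap_comap B ▸ AddSubgroup.map_mono h)

theorem isAlmostPrimeRight_iff_isWeaklyPrimeRight_map {f : R →ₙ+* S}
    (hf : Function.Surjective f) {P : AddSubgroup R} (hP : IsRightIdeal P)
    (hker : (f : R →+ S).ker = idealMul P P) :
    IsAlmostPrimeRight P ↔ IsWeaklyPrimeRight (P.map (f : R →+ S)) :=
  ⟨isWeaklyPrimeRight_map_of_isAlmostPrimeRight hf hker,
    isAlmostPrimeRight_of_isWeaklyPrimeRight_map hf hP hker⟩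

end Correspondence

section Quotient

variable [NonUnitalRing R]

def RingCon.mkₙ (c : RingCon R) : R →ₙ+* c.Quotient :=
  { qmap c with map_mul' := fun _ _ => rfl }

theorem RingCon.mkₙ_surjective (c : RingCon R) : Function.Surjective c.mkₙ :=
  fun x => Quot.inductionOn x fun a => ⟨a, rfl⟩

theorem ker_qmap_ringConOf (N : AddSubgroup R) (hr : ∀ x ∈ N, ∀ r : R, x * r ∈ N)
    (hl : ∀ x ∈ N, ∀ r : R, r * x ∈ N) : (qmap (ringConOf N hr hl)).ker = N := by
  ext x
  show ((x : R) : (ringConOf N hr hl).Quotient) = ((0 : R) : _) ↔ x ∈ N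
  rw [RingCon.eq]
  exact iff_of_eq (congrArg (· ∈ N) (sub_zero x))

end Quotient

/-- A two-sided ideal `P` of `R` is an almost prime right ideal iff
`P/P²` is a weakly prime right ideal of `R/P²`. -/
theorem almostPrime_iff_quotient_weaklyPrime [NonUnitalRing R] (P : AddSubgroup R)
    (hP : IsTwoSidedIdealSub P) :
    IsAlmostPrimeRight P ↔
      IsWeaklyPrimeRight
        (AddSubgroup.map
          (qmap (ringConOf (idealMul P P) (sq_right P hP) (sq_left P hP))) P) :=
  isAlmostPrimeRight_iff_isWeaklyPrimeRight_map (RingCon.mkₙ_surjective _)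
    (fun a ha r => (hP a ha r).1) (ker_qmap_ringConOf _ _ _)
end

section
/- Let f : R → S be a surjective ring homomorphism and P an almost prime right ideal of R with ker f ⊆ P. Then f(P) is an almost prime right ideal of S. -/
variable {R : Type*}

variable {S : Type*}

/-- The image of an almost prime right ideal containing the kernel, under a surjective
ring homomorphism, is an almost prime right ideal. -/
theorem map_almostPrime [NonUnitalRing R] [NonUnitalRing S] (f : R →ₙ+* S)
    (hf : Function.Surjective f) (P : AddSubgroup R) (hP : IsAlmostPrimeRight P)
    (hker : ∀ x : R, f x = 0 → x ∈ P) :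
    IsAlmostPrimeRight (AddSubgroup.map f.toAddMonoidHom P) := by
  obtain ⟨hPr, hPtop, hPap⟩ := hP
  have hmem : ∀ x : R, f x ∈ AddSubgroup.map f.toAddMonoidHom P → x ∈ P := by
    intro x hx
    obtain ⟨p, hp, hpx⟩ := hx
    have h0 : f (x - p) = 0 := by
      have : f p = f x := hpx
      simp [map_sub, this]
    have hxp := hker _ h0
    have : x = (x - p) + p := (sub_add_cancel x p).symm
    rw [this]
    exact P.add_mem hxp hp
  refine ⟨?_, ?_, ?_⟩
  · rintro a ⟨x, hx, rfl⟩ s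
    obtain ⟨r, rfl⟩ := hf s
    exact ⟨x * r, hPr x hx r, (map_mul f x r)⟩
  · intro h
    apply hPtop
    ext x
    simp only [AddSubgroup.mem_top, iff_true]
    have : f x ∈ (⊤ : AddSubgroup S) := trivial
    rw [← h] at this
    exact hmem x this
  · intro A B hA hB hAB hAB2
    set A' := A.comap f.toAddMonoidHom with hA'def
    set B' := B.comap f.toAddMonoidHom with hB'def
    have hA' : IsRightIdeal A' := by
      intro a ha r
      show f (a * r) ∈ A
      rw [map_mul]
      exact hA (f a) ha (f r)
    have hB' : IsRightIdeal B' := by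
      intro b hb r
      show f (b * r) ∈ B
      rw [map_mul]
      exact hB (f b) hb (f r)
    have hle : idealMul A' B' ≤ P := by
      rw [idealMul, AddSubgroup.closure_le]
      rintro x ⟨a, ha, b, hb, rfl⟩
      apply hmem
      apply hAB
      rw [map_mul]
      exact AddSubgroup.subset_closure ⟨f a, ha, f b, hb, rfl⟩
    have hPPle : idealMul P P ≤ AddSubgroup.comap f.toAddMonoidHom
        (idealMul (AddSubgroup.map f.toAddMonoidHom P) (AddSubgroup.map f.toAddMonoidHom P)) := by
      rw [idealMul, AddSubgroup.closure_le]
      rintro x ⟨p, hp, q, hq, rfl⟩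
      show f (p * q) ∈ idealMul _ _
      rw [map_mul]
      exact AddSubgroup.subset_closure ⟨f p, ⟨p, hp, rfl⟩, f q, ⟨q, hq, rfl⟩, rfl⟩
    have hnle : ¬ idealMul A' B' ≤ idealMul P P := by
      intro hcon
      apply hAB2
      rw [idealMul, AddSubgroup.closure_le]
      rintro x ⟨a, ha, b, hb, rfl⟩
      obtain ⟨a', rfl⟩ := hf a
      obtain ⟨b', rfl⟩ := hf b
      have h1 : a' * b' ∈ idealMul A' B' :=
        AddSubgroup.subset_closure ⟨a', ha, b', hb, rfl⟩
      have h2 := hPPle (hcon h1)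
      simpa [map_mul] using h2
    rcases hPap A' B' hA' hB' hle hnle with h | h
    · left
      rintro s hs
      obtain ⟨r, rfl⟩ := hf s
      exact ⟨r, h hs, rfl⟩
    · right
      rintro s hs
      obtain ⟨r, rfl⟩ := hf s
      exact ⟨r, h hs, rfl⟩
end

section
/- Let f : R → S be a surjective ring homomorphism. If every proper right ideal of R is almost prime, then every proper right ideal of S is almost prime. -/
variable {R : Type*}

variable {S : Type*}

/-- If `f : R → S` is a surjective ring homomorphism and every proper right ideal of
`R` is almost prime, then every proper right ideal of `S` is almost prime. -/
theorem fullyAlmostPrime_of_surjective [NonUnitalRing R] [NonUnitalRing S]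
    (f : R →ₙ+* S) (hf : Function.Surjective f)
    (hR : ∀ P : AddSubgroup R, IsRightIdeal P → P ≠ ⊤ → IsAlmostPrimeRight P) :
    ∀ Q : AddSubgroup S, IsRightIdeal Q → Q ≠ ⊤ → IsAlmostPrimeRight Q := by
  intro Q hQ hQtop
  refine ⟨hQ, hQtop, ?_⟩
  intro A B hA hB hAB hABn
  -- pullbacks along f
  have hright : ∀ C : AddSubgroup S, IsRightIdeal C →
      IsRightIdeal (C.comap f.toAddMonoidHom) := by
    intro C hC a ha r
    simp only [AddSubgroup.mem_comap, NonUnitalRingHom.coe_toAddMonoidHom] at *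
    rw [map_mul]
    exact hC _ ha _
  -- image of the pulled-back product is the product
  have hmapmul : ∀ C D : AddSubgroup S,
      (idealMul (C.comap f.toAddMonoidHom) (D.comap f.toAddMonoidHom)).map f.toAddMonoidHom
        = idealMul C D := by
    intro C D
    unfold idealMul
    rw [AddMonoidHom.map_closure]
    congr 1
    ext x
    constructor
    · rintro ⟨y, ⟨a, ha, b, hb, rfl⟩, rfl⟩
      exact ⟨f a, ha, f b, hb, map_mul f a b⟩
    · rintro ⟨a, ha, b, hb, rfl⟩
      obtain ⟨a', rfl⟩ := hf a
      obtain ⟨b', rfl⟩ := hf b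
      exact ⟨a' * b', ⟨a', ha, b', hb, rfl⟩, map_mul f a' b'⟩
  set P := Q.comap f.toAddMonoidHom with hPdef
  have hPtop : P ≠ ⊤ := by
    intro h
    apply hQtop
    ext s
    simp only [AddSubgroup.mem_top, iff_true]
    obtain ⟨r, rfl⟩ := hf s
    have : r ∈ P := h ▸ AddSubgroup.mem_top r
    exact this
  obtain ⟨_, _, hPmain⟩ := hR P (hright Q hQ) hPtop
  set A' := A.comap f.toAddMonoidHom with hA'def
  set B' := B.comap f.toAddMonoidHom with hB'def
  have hsub : idealMul A' B' ≤ P := by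
    rw [idealMul, AddSubgroup.closure_le]
    rintro x ⟨a, ha, b, hb, rfl⟩
    show f (a * b) ∈ Q
    rw [map_mul]
    exact hAB (AddSubgroup.subset_closure ⟨f a, ha, f b, hb, rfl⟩)
  have hnsub : ¬ idealMul A' B' ≤ idealMul P P := by
    intro h
    apply hABn
    calc idealMul A B = (idealMul A' B').map f.toAddMonoidHom := (hmapmul A B).symm
      _ ≤ (idealMul P P).map f.toAddMonoidHom := AddSubgroup.map_mono h
      _ = idealMul Q Q := hmapmul Q Q
  rcases hPmain A' B' (hright A hA) (hright B hB) hsub hnsub with h | h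
  · left
    intro a ha
    obtain ⟨r, rfl⟩ := hf a
    exact h (show r ∈ A' from ha)
  · right
    intro b hb
    obtain ⟨r, rfl⟩ := hf b
    exact h (show r ∈ B' from hb)
end
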